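/- arXiv:1812.08850 — 2 statements merged into one kernel-verified Lean document; each statement's English description precedes it below -/
import Mathlib

section
/- Let k ≥ 1 and let (Q₁,…,Q_m; b₁,…,b_m; y₁,…,y_{m−1}) be a winner-out run of query size q = 2k (with an arbitrary number of colors) such that each b_i is a majority ball of Q_i. Then all the balls b₁,…,b_m have the same color γ, and the number of balls of color γ in Q₁ ∪ ⋯ ∪ Q_m is at least m + k. -/
/-!
Since `|Q i| = 2k`, a majority color of `Q i` owns at least `k + 1` of its balls. Replacing the
answer `b i` leaves at least `k` balls of its color in `Q (i+1)`, which no other color can beat,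
so every answer has the color `γ` of `b 0`. Each step then loses one `γ`-ball from the current
query while the union only gains the fresh ball, so the union holds `i` more `γ`-balls than
`Q i`; at `i = m - 1` that is at least `(k + 1) + (m - 1)`.
-/

/-- The color class of color `γ` in the finite set `Q` of balls, under coloring `c`. -/
def colorClass {Ball Color : Type*} [DecidableEq Ball] [DecidableEq Color]
    (c : Ball → Color) (Q : Finset Ball) (γ : Color) : Finset Ball :=
  Q.filter (fun b => c b = γ)

/-- `x` is a majority ball of `Q`: its color class has more than `|Q|/2` elements. -/
def IsMajority {Ball Color : Type*} [DecidableEq Ball] [DecidableEq Color]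
    (c : Ball → Color) (Q : Finset Ball) (x : Ball) : Prop :=
  x ∈ Q ∧ Q.card < 2 * (colorClass c Q (c x)).card

/-- A winner-out run of length `m` and query size `q` (indices `0, …, m-1`):
each query `Q i` has size `q`, the answer ball `b i` belongs to `Q i`, the next query
is obtained by replacing `b i` with the fresh ball `y i`, and `y i` avoids all
previous queries `Q 0, …, Q i`. -/
def WinnerOutRun {Ball : Type*} [DecidableEq Ball]
    (q m : ℕ) (Q : ℕ → Finset Ball) (b y : ℕ → Ball) : Prop :=
  (∀ i < m, (Q i).card = q) ∧
  (∀ i < m, b i ∈ Q i) ∧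
  (∀ i, i + 1 < m → Q (i + 1) = insert (y i) (Q i \ {b i})) ∧
  (∀ i, i + 1 < m → ∀ j ≤ i, y i ∉ Q j)

open Finset

section ColorClass

variable {Ball Color : Type*} [DecidableEq Ball] [DecidableEq Color] (c : Ball → Color)

theorem card_colorClass_insert {Q : Finset Ball} {a : Ball} (ha : a ∉ Q) (γ : Color) :
    (colorClass c (insert a Q) γ).card = (colorClass c Q γ).card + if c a = γ then 1 else 0 := by
  unfold colorClass
  rw [filter_insert]
  split_ifs
  · exact card_insert_of_notMem (by simp [ha])
  · rfl

theorem card_colorClass_erase_add_one {Q : Finset Ball} {a : Ball} (ha : a ∈ Q) :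
    (colorClass c (Q.erase a) (c a)).card + 1 = (colorClass c Q (c a)).card := by
  rw [colorClass, filter_erase]
  exact card_erase_add_one (mem_filter.mpr ⟨ha, rfl⟩)

theorem card_colorClass_add_card_colorClass_le (Q : Finset Ball) {γ δ : Color} (h : γ ≠ δ) :
    (colorClass c Q γ).card + (colorClass c Q δ).card ≤ Q.card := by
  rw [← card_union_of_disjoint]
  · exact card_le_card (union_subset (filter_subset _ _) (filter_subset _ _))
  · exact disjoint_filter.mpr fun _ _ hγ hδ => h (hγ.symm.trans hδ)

theorem IsMajority.color_eq {Q : Finset Ball} {x : Ball} (hx : IsMajority c Q x) {γ : Color}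
    (hγ : Q.card ≤ 2 * (colorClass c Q γ).card) : c x = γ := by
  by_contra h
  have := card_colorClass_add_card_colorClass_le c Q h
  have := hx.2
  omega

end ColorClass

namespace WinnerOutRun

variable {Ball Color : Type*} [DecidableEq Ball] [DecidableEq Color] {c : Ball → Color}
  {q m : ℕ} {Q : ℕ → Finset Ball} {b y : ℕ → Ball}

theorem card_colorClass_succ_add_one (hrun : WinnerOutRun q m Q b y) {i : ℕ} (hi : i + 1 < m) :
    (colorClass c (Q (i + 1)) (c (b i))).card + 1
      = (colorClass c (Q i) (c (b i))).card + if c (y i) = c (b i) then 1 else 0 := by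
  have hy : y i ∉ (Q i).erase (b i) := fun h => hrun.2.2.2 i hi i le_rfl (mem_of_mem_erase h)
  rw [hrun.2.2.1 i hi, sdiff_singleton_eq_erase, card_colorClass_insert c hy,
    ← card_colorClass_erase_add_one c (hrun.2.1 i (by omega))]
  omega

theorem y_notMem_biUnion_range (hrun : WinnerOutRun q m Q b y) {i : ℕ} (hi : i + 1 < m) :
    y i ∉ (range (i + 1)).biUnion Q := by
  simp only [mem_biUnion, mem_range, not_exists, not_and]
  exact fun j hj => hrun.2.2.2 i hi j (by omega)

theorem biUnion_range_succ (hrun : WinnerOutRun q m Q b y) {i : ℕ} (hi : i + 1 < m) :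
    (range (i + 2)).biUnion Q = insert (y i) ((range (i + 1)).biUnion Q) := by
  rw [range_add_one, biUnion_insert, hrun.2.2.1 i hi, insert_union,
    union_eq_right.mpr (sdiff_subset.trans (subset_biUnion_of_mem Q (self_mem_range_succ i)))]

theorem color_eq_of_isMajority {k : ℕ} (hrun : WinnerOutRun (2 * k) m Q b y)
    (hmaj : ∀ i < m, IsMajority c (Q i) (b i)) : ∀ i < m, c (b i) = c (b 0) := by
  intro i hi
  induction i with
  | zero => rfl
  | succ i ih =>
    rw [← ih (by omega)]
    refine (hmaj (i + 1) hi).color_eq c ?_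
    have hstep := hrun.card_colorClass_succ_add_one (c := c) hi
    have hlarge := (hmaj i (by omega)).2
    rw [hrun.1 i (by omega)] at hlarge
    rw [hrun.1 (i + 1) hi]
    split_ifs at hstep <;> omega

theorem card_colorClass_biUnion_range (hrun : WinnerOutRun q m Q b y) {γ : Color}
    (hcol : ∀ i < m, c (b i) = γ) :
    ∀ i < m, (colorClass c ((range (i + 1)).biUnion Q) γ).card = (colorClass c (Q i) γ).card + i := by
  intro i hi
  induction i with
  | zero => simp
  | succ i ih =>
    have hstep := hrun.card_colorClass_succ_add_one (c := c) hi
    rw [hcol i (by omega)] at hstep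
    rw [hrun.biUnion_range_succ hi, card_colorClass_insert c (hrun.y_notMem_biUnion_range hi),
      ih (by omega)]
    omega

end WinnerOutRun

theorem winnerOut_majority_even_general {Ball Color : Type*}
    [DecidableEq Ball] [DecidableEq Color]
    (c : Ball → Color) (k m : ℕ) (hm : 1 ≤ m)
    (Q : ℕ → Finset Ball) (b y : ℕ → Ball)
    (hrun : WinnerOutRun (2 * k) m Q b y)
    (hmaj : ∀ i < m, IsMajority c (Q i) (b i)) :
    ∃ γ : Color, (∀ i < m, c (b i) = γ) ∧
      m + k ≤ (colorClass c ((Finset.range m).biUnion Q) γ).card := by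
  have hcol := hrun.color_eq_of_isMajority hmaj
  refine ⟨c (b 0), hcol, ?_⟩
  have hlast : m - 1 < m := by omega
  have hunion := hrun.card_colorClass_biUnion_range hcol (m - 1) hlast
  have hlarge := (hmaj (m - 1) hlast).2
  rw [hrun.1 (m - 1) hlast, hcol (m - 1) hlast] at hlarge
  rw [Nat.sub_add_cancel hm] at hunion
  omega

/-- in a winner-out run of query size `2k` where each answer `b i` is a
majority ball of `Q i`, all the answer balls have the same color `γ`, and at least
`m + k` balls of `Q 0 ∪ ⋯ ∪ Q (m-1)` have color `γ`. -/
theorem winnerOut_majority_even {Ball Color : Type*}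
    [DecidableEq Ball] [DecidableEq Color]
    (c : Ball → Color) (k m : ℕ) (hk : 1 ≤ k) (hm : 1 ≤ m)
    (Q : ℕ → Finset Ball) (b y : ℕ → Ball)
    (hrun : WinnerOutRun (2 * k) m Q b y)
    (hmaj : ∀ i < m, IsMajority c (Q i) (b i)) :
    ∃ γ : Color, (∀ i < m, c (b i) = γ) ∧
      m + k ≤ (colorClass c ((Finset.range m).biUnion Q) γ).card :=
  winnerOut_majority_even_general c k m hm Q b y hrun hmaj
end

section
/- Let Q be a finite set of colored balls having a plurality ball of color β, let u ∉ Q be a ball with c(u) = β, and let v ∈ Q. Then the set (Q \ {v}) ∪ {u} has a plurality ball, and every plurality ball of (Q \ {v}) ∪ {u} has color β. -/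
/-- `x` is a plurality ball of `Q`: its color class is strictly larger than
every other color class. -/
def IsPlurality {Ball Color : Type*} [DecidableEq Ball] [DecidableEq Color]
    (c : Ball → Color) (Q : Finset Ball) (x : Ball) : Prop :=
  x ∈ Q ∧ ∀ γ : Color, γ ≠ c x → (colorClass c Q γ).card < (colorClass c Q (c x)).card

/-! Swapping any ball `v` for a new ball `u` of the plurality color costs that color at most
one ball and gains it one, while every other color class can only shrink; so `u` is a
plurality ball of the new set, and all plurality balls of a set share one color. -/

open Finset

section Plurality

variable {Ball Color : Type*} [DecidableEq Ball] [DecidableEq Color] (c : Ball → Color)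

theorem colorClass_sdiff (Q s : Finset Ball) (γ : Color) :
    colorClass c (Q \ s) γ = colorClass c Q γ \ s := by
  ext x
  simp only [colorClass, mem_filter, mem_sdiff]
  tauto

theorem card_colorClass_sdiff_singleton_le (Q : Finset Ball) (v : Ball) (γ : Color) :
    #(colorClass c (Q \ {v}) γ) ≤ #(colorClass c Q γ) :=
  card_le_card (filter_subset_filter _ sdiff_subset)

theorem card_colorClass_le_sdiff_singleton_add_one (Q : Finset Ball) (v : Ball) (γ : Color) :
    #(colorClass c Q γ) ≤ #(colorClass c (Q \ {v}) γ) + 1 := by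
  rw [colorClass_sdiff]
  simpa using card_le_card_sdiff_add_card (s := colorClass c Q γ) (t := {v})

theorem colorClass_insert_of_ne {u : Ball} {γ : Color} (h : c u ≠ γ) (Q : Finset Ball) :
    colorClass c (insert u Q) γ = colorClass c Q γ := by
  simp only [colorClass, filter_insert, h, if_false]

theorem card_colorClass_insert_self {u : Ball} {Q : Finset Ball} (hu : u ∉ Q) :
    #(colorClass c (insert u Q) (c u)) = #(colorClass c Q (c u)) + 1 := by
  rw [colorClass, filter_insert, if_pos rfl,
    card_insert_of_notMem fun h => hu (mem_filter.mp h).1, colorClass]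

variable {c}

theorem IsPlurality.color_eq {Q : Finset Ball} {x y : Ball} (hx : IsPlurality c Q x)
    (hy : IsPlurality c Q y) : c x = c y := by
  by_contra h
  exact lt_asymm (hx.2 _ (Ne.symm h)) (hy.2 _ h)

theorem IsPlurality.insert_sdiff_singleton {Q : Finset Ball} {p u : Ball}
    (hp : IsPlurality c Q p) (hu : u ∉ Q) (hcu : c u = c p) (v : Ball) :
    IsPlurality c (insert u (Q \ {v})) u := by
  refine ⟨mem_insert_self _ _, fun γ hγ => ?_⟩
  have hu' : u ∉ Q \ {v} := fun h => hu (mem_sdiff.mp h).1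
  rw [colorClass_insert_of_ne c (Ne.symm hγ), card_colorClass_insert_self c hu']
  calc #(colorClass c (Q \ {v}) γ) ≤ #(colorClass c Q γ) :=
        card_colorClass_sdiff_singleton_le c Q v γ
    _ < #(colorClass c Q (c u)) := hcu ▸ hp.2 γ (hcu ▸ hγ)
    _ ≤ #(colorClass c (Q \ {v}) (c u)) + 1 :=
        card_colorClass_le_sdiff_singleton_add_one c Q v (c u)

end Plurality

theorem plurality_stable_under_swap_general {Ball Color : Type*}
    [DecidableEq Ball] [DecidableEq Color]
    (c : Ball → Color) (Q : Finset Ball) (β : Color)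
    (hplur : ∃ p, IsPlurality c Q p ∧ c p = β)
    (u : Ball) (hu : u ∉ Q) (hcu : c u = β)
    (v : Ball) :
    (∃ p, IsPlurality c (insert u (Q \ {v})) p) ∧
      ∀ p, IsPlurality c (insert u (Q \ {v})) p → c p = β := by
  obtain ⟨p, hp, rfl⟩ := hplur
  have hup : IsPlurality c (insert u (Q \ {v})) u := hp.insert_sdiff_singleton hu hcu v
  exact ⟨⟨u, hup⟩, fun q hq => (hq.color_eq hup).trans hcu⟩

/-- if `Q` has a plurality ball of color `β`, `u ∉ Q` has color `β`, and
`v ∈ Q`, then `(Q \ {v}) ∪ {u}` has a plurality ball, and every plurality ball of it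
has color `β`. -/
theorem plurality_stable_under_swap {Ball Color : Type*}
    [DecidableEq Ball] [DecidableEq Color]
    (c : Ball → Color) (Q : Finset Ball) (β : Color)
    (hplur : ∃ p, IsPlurality c Q p ∧ c p = β)
    (u : Ball) (hu : u ∉ Q) (hcu : c u = β)
    (v : Ball) (hv : v ∈ Q) :
    (∃ p, IsPlurality c (insert u (Q \ {v})) p) ∧
      ∀ p, IsPlurality c (insert u (Q \ {v})) p → c p = β :=
  plurality_stable_under_swap_general c Q β hplur u hu hcu v
end
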